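/- Let 𝒜 be a complex Banach algebra and let L₁, L₂ ∈ 𝒜. Then for every t ≥ 0, exp(t L₂)·exp(t L₁) − exp(t(L₁+L₂)) = ∫₀ᵗ exp(s L₂) · [L₂, exp(s L₁)] · exp((t−s)(L₁+L₂)) ds (the exact local error representation for the first-order Lie–Trotter splitting). -/

import Mathlib

open MeasureTheory NormedSpace

/-!
The product `s ↦ exp(s L₂) exp(s L₁) exp((t - s)(L₁ + L₂))` interpolates between
`exp(t(L₁ + L₂))` at `s = 0` and `exp(t L₂) exp(t L₁)` at `s = t`. Since `exp((t - s) M)` commutes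
with `M = L₁ + L₂`, its derivative is `exp(s L₂) [L₂, exp(s L₁)] exp((t - s) M)`, and the fundamental
theorem of calculus gives the representation. This is the special case
`F s = exp(s L₂) exp(s L₁)` of Duhamel's formula for `F t - F 0 exp(t M)`.
-/

section Duhamel

variable {𝔸 : Type*} [NormedRing 𝔸] [NormedAlgebra ℝ 𝔸] [CompleteSpace 𝔸]

@[fun_prop]
theorem continuous_exp_smul_const (A : 𝔸) : Continuous fun u : ℝ => exp (u • A) :=
  (differentiable_exp_smul_const ℝ A).continuous

theorem hasDerivAt_exp_sub_smul_const (C : 𝔸) (t s : ℝ) :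
    HasDerivAt (fun u : ℝ => exp ((t - u) • C)) (-(exp ((t - s) • C) * C)) s := by
  simpa [Function.comp_def] using
    (hasDerivAt_exp_smul_const C (t - s)).scomp s ((hasDerivAt_id s).const_sub t)

theorem hasDerivAt_exp_smul_mul_exp_smul (A B : 𝔸) (s : ℝ) :
    HasDerivAt (fun u : ℝ => exp (u • B) * exp (u • A))
      (exp (s • B) * B * exp (s • A) + exp (s • B) * (exp (s • A) * A)) s :=
  (hasDerivAt_exp_smul_const B s).mul (hasDerivAt_exp_smul_const A s)

theorem intervalIntegral_sub_mul_mul_exp_sub_smul {F F' : ℝ → 𝔸} {t : ℝ} (C : 𝔸)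
    (hF : ∀ s ∈ Set.uIcc 0 t, HasDerivAt F (F' s) s)
    (hF' : IntervalIntegrable F' volume 0 t) :
    ∫ s in (0:ℝ)..t, (F' s - F s * C) * exp ((t - s) • C) = F t - F 0 * exp (t • C) := by
  have hexp : Continuous fun s : ℝ => exp ((t - s) • C) :=
    (continuous_exp_smul_const C).comp (continuous_sub_left t)
  have hFcont : ContinuousOn F (Set.uIcc 0 t) :=
    fun s hs => (hF s hs).continuousAt.continuousWithinAt
  have hderiv : ∀ s ∈ Set.uIcc 0 t, HasDerivAt (fun u => F u * exp ((t - u) • C))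
      ((F' s - F s * C) * exp ((t - s) • C)) s := by
    intro s hs
    refine ((hF s hs).mul (hasDerivAt_exp_sub_smul_const C t s)).congr_deriv ?_
    rw [((Commute.refl C).smul_left (t - s)).exp_left.eq]
    noncomm_ring
  have hint : IntervalIntegrable (fun s => (F' s - F s * C) * exp ((t - s) • C)) volume 0 t :=
    (hF'.sub (hFcont.mul continuousOn_const).intervalIntegrable).mul_continuousOn
      hexp.continuousOn
  simpa using intervalIntegral.integral_eq_sub_of_hasDerivAt hderiv hint

end Duhamel

theorem lie_trotter_exact_local_error_representation
    {𝒜 : Type*} [NormedRing 𝒜] [NormedAlgebra ℂ 𝒜] [CompleteSpace 𝒜]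
    (L₁ L₂ : 𝒜) (t : ℝ) :
    exp (t • L₂) * exp (t • L₁) - exp (t • (L₁ + L₂)) =
      ∫ s in (0:ℝ)..t,
        exp (s • L₂) * (L₂ * exp (s • L₁) - exp (s • L₁) * L₂) *
          exp ((t - s) • (L₁ + L₂)) := by
  have hF' : Continuous fun s : ℝ =>
      exp (s • L₂) * L₂ * exp (s • L₁) + exp (s • L₂) * (exp (s • L₁) * L₁) := by
    fun_prop
  have duhamel := intervalIntegral_sub_mul_mul_exp_sub_smul (L₁ + L₂)
    (fun s _ => hasDerivAt_exp_smul_mul_exp_smul L₁ L₂ s) (hF'.intervalIntegrable 0 t)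
  simp only [zero_smul, exp_zero, one_mul] at duhamel
  rw [← duhamel]
  congr 1 with s
  noncomm_ring
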